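/- arXiv:2602.04821 — 3 statements merged into one kernel-verified Lean document; each statement's English description precedes it below -/
import Mathlib

section
/- Let n ≥ 1 and let R be a random variable uniformly distributed on {1, 2, …, n+1}, and set p = R/(n+1). Then for every α ∈ (0,1), ℙ(p ≤ α) = ⌊α(n+1)⌋/(n+1), and in particular ℙ(p ≤ α) ≤ α. Hence the conformalized p-value p is super-uniform. -/
open MeasureTheory

/-! The event `p ≤ α` is `R ≤ ⌊α(n+1)⌋`, which under the uniform law has probability
`⌊α(n+1)⌋/(n+1) ≤ α`. Since `R` is not assumed measurable, the law of `R` is only available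
through subadditivity: the events `{R ∈ t}` and `{R ∉ t}` are bounded above by their point
masses, and these bounds already add up to the total mass, so both are equalities. -/

section PointMasses

variable {Ω α : Type*} [MeasurableSpace Ω] {μ : Measure Ω} {R : Ω → α} {s : Finset α}

theorem measure_preimage_le_sum_of_ae_mem (hs : ∀ᵐ ω ∂μ, R ω ∈ s) (t : Set α)
    [DecidablePred (· ∈ t)] :
    μ {ω | R ω ∈ t} ≤ ∑ r ∈ s.filter (· ∈ t), μ {ω | R ω = r} := by
  calc μ {ω | R ω ∈ t} ≤ μ (⋃ r ∈ s.filter (· ∈ t), {ω | R ω = r}) := by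
        refine measure_mono_ae ?_
        filter_upwards [hs] with ω hωs hωt
        exact Set.mem_biUnion (Finset.mem_filter.mpr ⟨hωs, hωt⟩) rfl
    _ ≤ ∑ r ∈ s.filter (· ∈ t), μ {ω | R ω = r} := measure_biUnion_finset_le _ _

theorem measure_preimage_eq_sum_of_ae_mem [IsFiniteMeasure μ] (hs : ∀ᵐ ω ∂μ, R ω ∈ s)
    (hsum : ∑ r ∈ s, μ {ω | R ω = r} ≤ μ Set.univ) (t : Set α) [DecidablePred (· ∈ t)] :
    μ {ω | R ω ∈ t} = ∑ r ∈ s.filter (· ∈ t), μ {ω | R ω = r} := by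
  set a := ∑ r ∈ s.filter (· ∈ t), μ {ω | R ω = r}
  set b := ∑ r ∈ s.filter (· ∉ t), μ {ω | R ω = r}
  have hab : a + b ≤ μ Set.univ := (Finset.sum_filter_add_sum_filter_not s _ _).trans_le hsum
  have hb : b ≠ ⊤ :=
    ne_top_of_le_ne_top (measure_ne_top μ _) (le_add_self.trans hab)
  refine le_antisymm (measure_preimage_le_sum_of_ae_mem hs t)
    (ENNReal.le_of_add_le_add_right hb ?_)
  calc a + b ≤ μ Set.univ := hab
    _ ≤ μ {ω | R ω ∈ t} + μ {ω | R ω ∈ t}ᶜ := measure_univ_le_add_compl _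
    _ ≤ μ {ω | R ω ∈ t} + b := by gcongr; exact measure_preimage_le_sum_of_ae_mem hs tᶜ

theorem measure_preimage_eq_card_div_of_uniform [IsProbabilityMeasure μ]
    (hs : ∀ᵐ ω ∂μ, R ω ∈ s) (hunif : ∀ r ∈ s, μ {ω | R ω = r} = 1 / s.card)
    (t : Set α) [DecidablePred (· ∈ t)] :
    μ {ω | R ω ∈ t} = (s.filter (· ∈ t)).card / s.card := by
  have hsum : ∀ u ⊆ s, ∑ r ∈ u, μ {ω | R ω = r} = u.card / s.card := fun u hu => by
    rw [Finset.sum_congr rfl fun r hr => hunif r (hu hr), Finset.sum_const, nsmul_eq_mul,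
      mul_one_div]
  refine (measure_preimage_eq_sum_of_ae_mem hs ?_ t).trans (hsum _ (Finset.filter_subset _ _))
  rw [hsum s subset_rfl, measure_univ]
  exact ENNReal.div_self_le_one

end PointMasses

theorem conformal_pvalue_superuniform_general
    {Ω : Type*} [MeasurableSpace Ω] (ℙ : Measure Ω) [IsProbabilityMeasure ℙ]
    (n : ℕ) (R : Ω → ℕ)
    (hrange : ∀ᵐ ω ∂ℙ, R ω ∈ Finset.Icc 1 (n + 1))
    (hunif : ∀ r ∈ Finset.Icc 1 (n + 1), ℙ {ω | R ω = r} = 1 / (n + 1))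
    (p : Ω → ℝ) (hp : ∀ ω, p ω = (R ω : ℝ) / (n + 1))
    (α : ℝ) (hα : α ∈ Set.Ioo (0 : ℝ) 1) :
    ℙ {ω | p ω ≤ α} = ENNReal.ofReal ((⌊α * (n + 1)⌋₊ : ℝ) / (n + 1)) ∧
    ℙ {ω | p ω ≤ α} ≤ ENNReal.ofReal α := by
  obtain ⟨hα0, hα1⟩ := hα
  set k := ⌊α * (n + 1)⌋₊
  have hN : (0 : ℝ) < n + 1 := by positivity
  have hαN : 0 ≤ α * (n + 1) := by positivity
  have hkN : k ≤ n + 1 := by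
    have : (k : ℝ) ≤ n + 1 := (Nat.floor_le hαN).trans (by nlinarith)
    exact_mod_cast this
  have hevent : {ω | p ω ≤ α} = {ω | R ω ∈ Set.Iic k} := by
    ext ω
    simp only [Set.mem_ofPred_eq, Set.mem_Iic, hp, div_le_iff₀ hN]
    exact (Nat.le_floor_iff hαN).symm
  have hcard : (Finset.Icc 1 (n + 1)).card = n + 1 := by simp
  have hcount : ((Finset.Icc 1 (n + 1)).filter (· ∈ Set.Iic k)).card = k := by
    rw [show (Finset.Icc 1 (n + 1)).filter (· ∈ Set.Iic k) = Finset.Icc 1 k by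
      ext r; simp only [Finset.mem_filter, Finset.mem_Icc, Set.mem_Iic]; omega]
    simp
  have hprob : ℙ {ω | p ω ≤ α} = k / (n + 1) := by
    rw [hevent, measure_preimage_eq_card_div_of_uniform hrange (by simpa [hcard] using hunif),
      hcount, hcard]
    push_cast; rfl
  have hofReal : ENNReal.ofReal ((k : ℝ) / (n + 1)) = k / (n + 1) := by
    rw [ENNReal.ofReal_div_of_pos hN]
    norm_cast
  refine ⟨hprob.trans hofReal.symm, ?_⟩
  rw [hprob, ← hofReal]
  exact ENNReal.ofReal_le_ofReal ((div_le_iff₀ hN).mpr (Nat.floor_le hαN))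

/-- Super-uniformity of the conformalized p-value: if `R` is uniform on
`{1,…,n+1}` and `p = R/(n+1)`, then for every `α ∈ (0,1)`,
`ℙ(p ≤ α) = ⌊α(n+1)⌋/(n+1) ≤ α`. -/
theorem conformal_pvalue_superuniform
    {Ω : Type*} [MeasurableSpace Ω] (ℙ : Measure Ω) [IsProbabilityMeasure ℙ]
    (n : ℕ) (hn : 1 ≤ n) (R : Ω → ℕ)
    (hrange : ∀ᵐ ω ∂ℙ, R ω ∈ Finset.Icc 1 (n + 1))
    (hunif : ∀ r ∈ Finset.Icc 1 (n + 1), ℙ {ω | R ω = r} = 1 / (n + 1))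
    (p : Ω → ℝ) (hp : ∀ ω, p ω = (R ω : ℝ) / (n + 1))
    (α : ℝ) (hα : α ∈ Set.Ioo (0 : ℝ) 1) :
    ℙ {ω | p ω ≤ α} = ENNReal.ofReal ((⌊α * (n + 1)⌋₊ : ℝ) / (n + 1)) ∧
    ℙ {ω | p ω ≤ α} ≤ ENNReal.ofReal α :=
  conformal_pvalue_superuniform_general ℙ n R hrange hunif p hp α hα
end

section
/- Let (Ω, ℱ, ℙ) be a probability space, m ≥ 1, and let P₁, …, P_m : Ω → [0,1] be random p-values with arbitrary joint dependence. Let N ⊆ {1,…,m} be the set of true null hypotheses and suppose each null p-value is super-uniform: for every i ∈ N and every t ∈ [0,1], ℙ(P_i ≤ t) ≤ t. Let c_m = Σ_{i=1}^m 1/i and α ∈ (0,1). Define the Benjamini–Yekutieli procedure: with order statistics P_{(1)} ≤ … ≤ P_{(m)}, let k* = max{k : P_{(k)} ≤ k α/(m c_m)} (with k* = 0 if the set is empty), and reject exactly the hypotheses i with P_i ≤ k* α/(m c_m). Let V be the number of rejected true nulls and Rj the total number of rejections. Then the false discovery rate satisfies FDR = 𝔼[V / max(Rj, 1)] ≤ (|N|/m)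 · α ≤ α. -/
open MeasureTheory
open scoped Classical

/-!
Write `c = α / (m c_m)` and let `k` be the step-up index, so that at least `k` hypotheses are
rejected. A null hypothesis with p-value `x` therefore contributes at most `1 / k` to the false
discovery proportion, and only when `x ≤ k c`. In that case `1 / k ≤ g(x)` for a majorant `g`
independent of `k`, obtained by Abel summation of `∑_{j ≤ m} 1[(j-1)c < x ≤ jc] / j`. The majorant
is a nonnegative combination of the indicators of `x ≤ jc`, so super-uniformity bounds its
expectation term by term by `c ∑_{j ≤ m} 1/j = α / m`; summing over the nulls gives `|N| α / m`.
Only linearity of expectation is used, so the dependence between the p-values is irrelevant.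
-/

open Finset

namespace Tuple

variable {n : ℕ} {α : Type*} [LinearOrder α]

theorem card_filter_comp_sort_le (f : Fin n → α) (a : α) :
    #{i | f (sort f i) ≤ a} = #{i | f i ≤ a} :=
  card_equiv (sort f) (by simp)

theorem lt_card_filter_le_iff_sort_le {f : Fin n → α} {j : Fin n} {a : α} :
    j < #{i | f i ≤ a} ↔ f (sort f j) ≤ a := by
  rw [← card_filter_comp_sort_le]
  exact lt_card_le_iff_apply_le_of_monotone (monotone_sort f)

end Tuple

section StepUp

variable {m : ℕ} {α : Type*} [LinearOrder α] (f : Fin m → α) (τ : ℕ → α)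

-- `k : Fin m` stands for the `(k + 1)`-th order statistic; the index is `0` if no threshold is met.
def stepUpIndex : ℕ :=
  ({k | f (Tuple.sort f k) ≤ τ (k + 1)} : Finset (Fin m)).sup fun k => k + 1

theorem stepUpIndex_le : stepUpIndex f τ ≤ m :=
  Finset.sup_le fun k _ => k.isLt

theorem stepUpIndex_le_card : stepUpIndex f τ ≤ #{i | f i ≤ τ (stepUpIndex f τ)} := by
  rcases Nat.eq_zero_or_pos (stepUpIndex f τ) with h | h
  · simp [h]
  obtain ⟨k₀, hk₀, -⟩ := Finset.lt_sup_iff.1 h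
  obtain ⟨k, hk, hks⟩ := exists_mem_eq_sup _ ⟨k₀, hk₀⟩ fun k : Fin m => (k : ℕ) + 1
  rw [← stepUpIndex] at hks
  rw [hks]
  exact Tuple.lt_card_filter_le_iff_sort_le.2 (mem_filter.1 hk).2

end StepUp

theorem sum_Ico_one_div_mul_succ {k m : ℕ} (h : k ≤ m) :
    ∑ j ∈ Ico k m, (1 : ℝ) / ((j + 1) * (j + 2)) = 1 / (k + 1) - 1 / (m + 1) := by
  induction m, h using Nat.le_induction with
  | base => simp
  | succ m hkm ih =>
    rw [sum_Ico_succ_top hkm, ih]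
    push_cast
    field_simp
    ring

theorem sum_range_one_div_add_two_add_div_succ (m : ℕ) :
    ∑ j ∈ range m, 1 / ((j : ℝ) + 2) + m / (m + 1) = ∑ j ∈ range m, 1 / ((j : ℝ) + 1) := by
  induction m with
  | zero => simp
  | succ m ih =>
    rw [sum_range_succ, sum_range_succ, ← ih]
    push_cast
    field_simp
    ring

theorem one_le_sum_range_one_div_succ {m : ℕ} (hm : 0 < m) :
    1 ≤ ∑ j ∈ range m, 1 / ((j : ℝ) + 1) := by
  simpa using single_le_sum (f := fun j : ℕ => 1 / ((j : ℝ) + 1)) (fun j _ => by positivity)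
    (mem_range.2 hm)

noncomputable def byMajorant (m : ℕ) (c x : ℝ) : ℝ :=
  ∑ j ∈ range m, (Set.Iic ((j + 1) * c)).indicator (1 : ℝ → ℝ) x / ((j + 1) * (j + 2)) +
    (Set.Iic (m * c)).indicator (1 : ℝ → ℝ) x / (m + 1)

theorem indicator_Iic_one_nonneg (t x : ℝ) : 0 ≤ (Set.Iic t).indicator (1 : ℝ → ℝ) x :=
  Set.indicator_nonneg (fun _ _ => zero_le_one) x

theorem byMajorant_nonneg (m : ℕ) (c x : ℝ) : 0 ≤ byMajorant m c x := by
  unfold byMajorant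
  exact add_nonneg (sum_nonneg fun j _ => div_nonneg (indicator_Iic_one_nonneg _ x) (by positivity))
    (div_nonneg (indicator_Iic_one_nonneg _ x) (by positivity))

theorem one_div_le_byMajorant {m k : ℕ} {c x : ℝ} (hc : 0 ≤ c) (hk : 1 ≤ k) (hkm : k ≤ m)
    (hx : x ≤ k * c) : 1 / (k : ℝ) ≤ byMajorant m c x := by
  obtain ⟨k, rfl⟩ := Nat.exists_eq_add_of_le' hk
  have hrej : ∀ j : ℕ, k ≤ j → (Set.Iic ((j + 1) * c)).indicator (1 : ℝ → ℝ) x = 1 := by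
    intro j hj
    refine Set.indicator_of_mem (Set.mem_Iic.2 (hx.trans ?_)) 1
    push_cast
    gcongr
  have hlast : (Set.Iic (m * c)).indicator (1 : ℝ → ℝ) x = 1 :=
    Set.indicator_of_mem (Set.mem_Iic.2 (hx.trans (by gcongr))) 1
  calc 1 / ((k + 1 : ℕ) : ℝ)
      = ∑ j ∈ Ico k m, 1 / (((j : ℝ) + 1) * (j + 2)) + 1 / (m + 1) := by
        rw [sum_Ico_one_div_mul_succ (by omega)]; push_cast; ring
    _ = ∑ j ∈ Ico k m, (Set.Iic ((j + 1) * c)).indicator 1 x / (((j : ℝ) + 1) * (j + 2)) +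
          (Set.Iic (m * c)).indicator 1 x / (m + 1) := by
        rw [hlast]
        congr 1
        exact sum_congr rfl fun j hj => by rw [hrej j (mem_Ico.1 hj).1]
    _ ≤ byMajorant m c x := by
        unfold byMajorant
        gcongr ?_ + _
        refine sum_le_sum_of_subset_of_nonneg (fun j hj => mem_range.2 (mem_Ico.1 hj).2)
          fun j _ _ => div_nonneg (indicator_Iic_one_nonneg _ x) (by positivity)

theorem card_filter_div_max_le_sum_byMajorant {m : ℕ} (N : Finset (Fin m)) (x : Fin m → ℝ)
    {c : ℝ} (hc : 0 ≤ c) {k R : ℕ} (hkm : k ≤ m) (hkR : k ≤ R) :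
    (#{i ∈ N | x i ≤ k * c} : ℝ) / max (R : ℝ) 1 ≤ ∑ i ∈ N, byMajorant m c (x i) := by
  rw [card_filter, Nat.cast_sum, sum_div]
  refine sum_le_sum fun i _ => ?_
  split_ifs with hx
  · calc ((1 : ℕ) : ℝ) / max (R : ℝ) 1 ≤ 1 / ((max k 1 : ℕ) : ℝ) := by
          push_cast
          gcongr
      _ ≤ byMajorant m c (x i) :=
          one_div_le_byMajorant hc (le_max_right _ _) (max_le hkm i.pos)
            (hx.trans (by gcongr; exact_mod_cast le_max_left k 1))
  · simpa using byMajorant_nonneg m c (x i)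

theorem natCast_mul_mem_Icc_of_le {m k : ℕ} {c : ℝ} (hc : 0 ≤ c) (hmc : m * c ≤ 1) (hk : k ≤ m) :
    (k : ℝ) * c ∈ Set.Icc (0 : ℝ) 1 :=
  ⟨by positivity, le_trans (by gcongr) hmc⟩

def SuperUniform {Ω : Type*} [MeasurableSpace Ω] (μ : Measure Ω) (X : Ω → ℝ) : Prop :=
  ∀ t ∈ Set.Icc (0 : ℝ) 1, μ {ω | X ω ≤ t} ≤ ENNReal.ofReal t

theorem indicator_Iic_comp {Ω : Type*} (X : Ω → ℝ) (t : ℝ) :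
    (fun ω => (Set.Iic t).indicator (1 : ℝ → ℝ) (X ω)) = (X ⁻¹' Set.Iic t).indicator 1 :=
  funext fun _ => (Set.indicator_comp_right X).symm

namespace SuperUniform

variable {Ω : Type*} [MeasurableSpace Ω] {μ : Measure Ω} {X : Ω → ℝ} {t : ℝ}

theorem integrable_indicator_Iic (hsu : SuperUniform μ X) (hX : Measurable X)
    (ht : t ∈ Set.Icc (0 : ℝ) 1) :
    Integrable (fun ω => (Set.Iic t).indicator (1 : ℝ → ℝ) (X ω)) μ := by
  rw [indicator_Iic_comp, integrable_indicator_iff (hX measurableSet_Iic)]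
  exact integrableOn_const ((hsu t ht).trans_lt ENNReal.ofReal_lt_top).ne

theorem integral_indicator_Iic_le (hsu : SuperUniform μ X) (hX : Measurable X)
    (ht : t ∈ Set.Icc (0 : ℝ) 1) :
    ∫ ω, (Set.Iic t).indicator (1 : ℝ → ℝ) (X ω) ∂μ ≤ t := by
  rw [indicator_Iic_comp, integral_indicator_one (hX measurableSet_Iic)]
  exact ENNReal.toReal_le_of_le_ofReal ht.1 (hsu t ht)

variable {m : ℕ} {c : ℝ}

theorem integrable_byMajorant (hsu : SuperUniform μ X) (hX : Measurable X) (hc : 0 ≤ c)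
    (hmc : m * c ≤ 1) : Integrable (fun ω => byMajorant m c (X ω)) μ := by
  unfold byMajorant
  refine (integrable_finsetSum _ fun j hj => ?_).add ?_
  · refine (hsu.integrable_indicator_Iic hX ?_).div_const _
    exact_mod_cast natCast_mul_mem_Icc_of_le hc hmc (mem_range.1 hj)
  · exact (hsu.integrable_indicator_Iic hX (natCast_mul_mem_Icc_of_le hc hmc le_rfl)).div_const _

theorem integral_byMajorant_le (hsu : SuperUniform μ X) (hX : Measurable X) (hc : 0 ≤ c)
    (hmc : m * c ≤ 1) : ∫ ω, byMajorant m c (X ω) ∂μ ≤ c * ∑ j ∈ range m, 1 / ((j : ℝ) + 1) := by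
  have hmem : ∀ j ∈ range m, ((j : ℝ) + 1) * c ∈ Set.Icc (0 : ℝ) 1 := fun j hj => by
    exact_mod_cast natCast_mul_mem_Icc_of_le hc hmc (mem_range.1 hj)
  calc ∫ ω, byMajorant m c (X ω) ∂μ
      = ∑ j ∈ range m, (∫ ω, (Set.Iic ((j + 1) * c)).indicator (1 : ℝ → ℝ) (X ω) ∂μ) /
            (((j : ℝ) + 1) * (j + 2)) +
          (∫ ω, (Set.Iic (m * c)).indicator (1 : ℝ → ℝ) (X ω) ∂μ) / (m + 1) := by
        unfold byMajorant
        have hint := fun j hj => (hsu.integrable_indicator_Iic hX (hmem j hj)).div_const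
          (((j : ℝ) + 1) * (j + 2))
        rw [integral_add (integrable_finsetSum _ hint), integral_finsetSum _ hint]
        · simp only [integral_div]
        · exact (hsu.integrable_indicator_Iic hX
            (natCast_mul_mem_Icc_of_le hc hmc le_rfl)).div_const _
    _ ≤ ∑ j ∈ range m, ((j : ℝ) + 1) * c / (((j : ℝ) + 1) * (j + 2)) + m * c / (m + 1) := by
        gcongr with j hj
        · exact hsu.integral_indicator_Iic_le hX (hmem j hj)
        · exact hsu.integral_indicator_Iic_le hX (natCast_mul_mem_Icc_of_le hc hmc le_rfl)
    _ = c * ∑ j ∈ range m, 1 / ((j : ℝ) + 1) := by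
        rw [← sum_range_one_div_add_two_add_div_succ, mul_add, mul_sum]
        congr 1
        · exact sum_congr rfl fun j _ => by field_simp
        · ring

end SuperUniform

theorem benjamini_yekutieli_fdr_control_general
    {Ω : Type*} [MeasurableSpace Ω] (ℙ : Measure Ω)
    (m : ℕ) (P : Fin m → Ω → ℝ)
    (hmeas : ∀ i, Measurable (P i))
    (N : Finset (Fin m))
    (hnull : ∀ i ∈ N, ∀ t ∈ Set.Icc (0 : ℝ) 1,
      ℙ {ω | P i ω ≤ t} ≤ ENNReal.ofReal t)
    (α : ℝ) (hα : α ∈ Set.Ioo (0 : ℝ) 1)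
    (cm : ℝ) (hcm : cm = ∑ i ∈ Finset.range m, (1 : ℝ) / (i + 1))
    (kstar : Ω → ℕ)
    -- `k* = max{k ≥ 1 : P_{(k)} ≤ k α/(m c_m)}` (0 if empty), where the `k`-th
    -- order statistic `P_{(k)}` is realized as `(P · ω) ∘ Tuple.sort (P · ω)`
    -- evaluated at the `Fin m`-index `k'` with `k = k' + 1`.
    (hkstar : ∀ ω, kstar ω =
      (Finset.univ.filter (fun k' : Fin m =>
          P (Tuple.sort (fun i => P i ω) k') ω ≤
            ((k' : ℕ) + 1) * α / (m * cm))).sup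
        (fun k' : Fin m => (k' : ℕ) + 1))
    (V Rj : Ω → ℕ)
    (hV : ∀ ω, V ω =
      (N.filter (fun i => P i ω ≤ (kstar ω : ℝ) * α / (m * cm))).card)
    (hRj : ∀ ω, Rj ω =
      (Finset.univ.filter (fun i : Fin m =>
        P i ω ≤ (kstar ω : ℝ) * α / (m * cm))).card) :
    (∫ ω, (V ω : ℝ) / max (Rj ω : ℝ) 1 ∂ℙ) ≤ ((N.card : ℝ) / m) * α ∧
    ((N.card : ℝ) / m) * α ≤ α := by
  obtain ⟨hα0, hα1⟩ := hα
  set c := α / (m * cm) with hc_def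
  obtain ⟨hc, hmc, hccm⟩ : 0 ≤ c ∧ m * c ≤ 1 ∧ c * cm = α / m := by
    rcases Nat.eq_zero_or_pos m with rfl | hm
    · simp [c]
    have hcm1 : 1 ≤ cm := hcm ▸ one_le_sum_range_one_div_succ hm
    refine ⟨div_nonneg hα0.le (mul_nonneg m.cast_nonneg (by linarith)), ?_,
      by rw [hc_def]; field_simp⟩
    calc m * c = α / cm := by rw [hc_def]; field_simp
      _ ≤ 1 := div_le_one_of_le₀ (hα1.le.trans hcm1) (by linarith)
  have hk : ∀ ω, kstar ω = stepUpIndex (fun i => P i ω) (fun n => n * c) := fun ω => by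
    simp [hkstar ω, stepUpIndex, mul_div_assoc, ← hc_def]
  have hfdp : ∀ ω, (V ω : ℝ) / max (Rj ω : ℝ) 1 ≤ ∑ i ∈ N, byMajorant m c (P i ω) := by
    intro ω
    simp only [hV ω, hRj ω, mul_div_assoc, hk ω]
    exact card_filter_div_max_le_sum_byMajorant N _ hc (stepUpIndex_le _ _)
      (stepUpIndex_le_card _ _)
  have hint : ∀ i ∈ N, Integrable (fun ω => byMajorant m c (P i ω)) ℙ := fun i hi =>
    SuperUniform.integrable_byMajorant (hnull i hi) (hmeas i) hc hmc
  refine ⟨?_, mul_le_of_le_one_left hα0.le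
    (div_le_one_of_le₀ (by exact_mod_cast card_finset_fin_le N) m.cast_nonneg)⟩
  calc ∫ ω, (V ω : ℝ) / max (Rj ω : ℝ) 1 ∂ℙ
      ≤ ∫ ω, ∑ i ∈ N, byMajorant m c (P i ω) ∂ℙ :=
        integral_mono_of_nonneg (.of_forall fun ω => by positivity) (integrable_finsetSum _ hint)
          (.of_forall hfdp)
    _ = ∑ i ∈ N, ∫ ω, byMajorant m c (P i ω) ∂ℙ := integral_finsetSum _ hint
    _ ≤ ∑ i ∈ N, c * cm := sum_le_sum fun i hi => hcm ▸
        SuperUniform.integral_byMajorant_le (hnull i hi) (hmeas i) hc hmc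
    _ = (N.card / m) * α := by rw [sum_const, nsmul_eq_mul, hccm]; ring

/-- Benjamini–Yekutieli FDR control under arbitrary dependence: given `m`
p-values with values in `[0,1]`, a set `N` of true nulls whose p-values are
super-uniform, the BY step-up procedure with thresholds `k α/(m c_m)`,
`c_m = Σ_{i=1}^m 1/i`, rejecting exactly the `P_i ≤ k* α/(m c_m)` where
`k* = max{k : P_{(k)} ≤ k α/(m c_m)}` (with `k* = 0` if the set is empty),
satisfies `FDR = 𝔼[V / max(Rj, 1)] ≤ (|N|/m) α ≤ α`. -/
theorem benjamini_yekutieli_fdr_control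
    {Ω : Type*} [MeasurableSpace Ω] (ℙ : Measure Ω) [IsProbabilityMeasure ℙ]
    (m : ℕ) (hm : 1 ≤ m) (P : Fin m → Ω → ℝ)
    (hmeas : ∀ i, Measurable (P i))
    (hval : ∀ i ω, P i ω ∈ Set.Icc (0 : ℝ) 1)
    (N : Finset (Fin m))
    (hnull : ∀ i ∈ N, ∀ t ∈ Set.Icc (0 : ℝ) 1,
      ℙ {ω | P i ω ≤ t} ≤ ENNReal.ofReal t)
    (α : ℝ) (hα : α ∈ Set.Ioo (0 : ℝ) 1)
    (cm : ℝ) (hcm : cm = ∑ i ∈ Finset.range m, (1 : ℝ) / (i + 1))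
    (kstar : Ω → ℕ)
    -- `k* = max{k ≥ 1 : P_{(k)} ≤ k α/(m c_m)}` (0 if empty), where the `k`-th
    -- order statistic `P_{(k)}` is realized as `(P · ω) ∘ Tuple.sort (P · ω)`
    -- evaluated at the `Fin m`-index `k'` with `k = k' + 1`.
    (hkstar : ∀ ω, kstar ω =
      (Finset.univ.filter (fun k' : Fin m =>
          P (Tuple.sort (fun i => P i ω) k') ω ≤
            ((k' : ℕ) + 1) * α / (m * cm))).sup
        (fun k' : Fin m => (k' : ℕ) + 1))
    (V Rj : Ω → ℕ)
    (hV : ∀ ω, V ω =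
      (N.filter (fun i => P i ω ≤ (kstar ω : ℝ) * α / (m * cm))).card)
    (hRj : ∀ ω, Rj ω =
      (Finset.univ.filter (fun i : Fin m =>
        P i ω ≤ (kstar ω : ℝ) * α / (m * cm))).card) :
    (∫ ω, (V ω : ℝ) / max (Rj ω : ℝ) 1 ∂ℙ) ≤ ((N.card : ℝ) / m) * α ∧
    ((N.card : ℝ) / m) * α ≤ α :=
  benjamini_yekutieli_fdr_control_general ℙ m P hmeas N hnull α hα cm hcm kstar hkstar V Rj hV hRj
end

section
/- Let S₁, …, S_n be calibration anomaly scores and S a test score, all real-valued random variables. Suppose at most c of the calibration scores are contaminated, and the remaining n − c clean calibration scores together with S are exchangeable with almost surely pairwise distinct values, with S drawn from the null. Let k ≥ c, form the trimmed calibration set C_trim by removing the k largest calibration scores, and define the trimmed p-value p_trim = (1 + #{j ∈ C_trim : S_j ≥ S}) / (1 + (n − k)). Then for every α ∈ (0,1), ℙ(p_trim ≤ α) ≤ α + k/n + c/n. -/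
/-!
Count the rank of a score from the top, ties included. Among the clean scores and the test score,
exchangeability makes every position equally likely to have rank at most `r`, and at most `r`
positions can (they all score at least the lowest of them), so the test score has rank at most `r`
with probability at most `r / (n - c + 1)`. The trimmed set misses at most `k` clean scores, so
`p_trim ≤ α` forces this rank below `α (n - k + 1) + k`, and
`(α (n - k + 1) + k) / (n - c + 1) ≤ α + k/n + c/n` as soon as the right-hand side is below `1`.
-/

open MeasureTheory Finset
open scoped Classical

theorem card_filter_comp_le_card_filter_add_card_compl {α β : Type*} [Fintype α] [Fintype β]
    [DecidableEq β] (e : α ↪ β) (T : Finset β) (p : β → Prop) [DecidablePred p] :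
    #{i | p (e i)} ≤ #(T.filter p) + #Tᶜ := by
  calc #{i | p (e i)} ≤ #{j | p j} :=
        card_le_card_of_injOn e (fun i hi => by simpa using hi) e.injective.injOn
    _ ≤ #(T.filter p ∪ Tᶜ) := card_le_card fun j hj => by by_cases j ∈ T <;> simp_all
    _ ≤ #(T.filter p) + #Tᶜ := card_union_le _ _

namespace Conformal

variable {ι : Type*} [Fintype ι]

noncomputable def rankFromTop (y : ι → ℝ) (j : ι) : ℕ :=
  #{i | y j ≤ y i}

theorem measurable_rankFromTop (j : ι) : Measurable fun y : ι → ℝ => rankFromTop y j := by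
  simp only [rankFromTop, card_filter]
  refine Finset.measurable_sum _ fun i _ => Measurable.ite ?_ measurable_const measurable_const
  exact measurableSet_le (measurable_pi_apply j) (measurable_pi_apply i)

theorem rankFromTop_comp_perm (y : ι → ℝ) (π : Equiv.Perm ι) (j : ι) :
    rankFromTop (y ∘ π) j = rankFromTop y (π j) :=
  card_equiv π fun i => by simp

theorem card_rankFromTop_le_le (y : ι → ℝ) (r : ℕ) : #{j | rankFromTop y j ≤ r} ≤ r := by
  rcases (filter (fun j => rankFromTop y j ≤ r) univ).eq_empty_or_nonempty with hJ | hJ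
  · simp [hJ]
  obtain ⟨j₀, hj₀, hmin⟩ := exists_min_image _ y hJ
  calc #{j | rankFromTop y j ≤ r} ≤ rankFromTop y j₀ :=
        card_le_card fun i hi => mem_filter.2 ⟨mem_univ i, hmin i hi⟩
    _ ≤ r := (mem_filter.1 hj₀).2

variable {Ω : Type*} [MeasurableSpace Ω] {μ : Measure Ω} {X : Ω → ι → ℝ}

theorem measure_rankFromTop_le_eq (hX : Measurable X)
    (hexch : ∀ π : Equiv.Perm ι, μ.map (fun ω => X ω ∘ π) = μ.map X) (i j : ι) (r : ℕ) :
    μ {ω | rankFromTop (X ω) i ≤ r} = μ {ω | rankFromTop (X ω) j ≤ r} := by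
  have hB : MeasurableSet {y : ι → ℝ | rankFromTop y j ≤ r} :=
    measurable_rankFromTop j measurableSet_Iic
  have hπX : Measurable fun ω => X ω ∘ Equiv.swap i j :=
    measurable_pi_lambda _ fun l => measurable_pi_apply _ |>.comp hX
  have hpre : {ω | rankFromTop (X ω) i ≤ r} =
      (fun ω => X ω ∘ Equiv.swap i j) ⁻¹' {y | rankFromTop y j ≤ r} := by
    ext ω
    simp [rankFromTop_comp_perm]
  rw [hpre, ← Measure.map_apply hπX hB, hexch, Measure.map_apply hX hB]
  rfl

theorem sum_measure_rankFromTop_le_le (hX : Measurable X) (r : ℕ) :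
    ∑ j, μ {ω | rankFromTop (X ω) j ≤ r} ≤ r * μ Set.univ := by
  have hA : ∀ j, MeasurableSet {ω | rankFromTop (X ω) j ≤ r} := fun j =>
    (measurable_rankFromTop j).comp hX measurableSet_Iic
  calc ∑ j, μ {ω | rankFromTop (X ω) j ≤ r}
      = ∫⁻ ω, ∑ j, {ω | rankFromTop (X ω) j ≤ r}.indicator 1 ω ∂μ := by
        rw [lintegral_finsetSum _ fun j _ => measurable_one.indicator (hA j)]
        simp only [lintegral_indicator_one (hA _)]
    _ ≤ ∫⁻ _, (r : ENNReal) ∂μ := by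
        refine lintegral_mono fun ω => ?_
        simp only [Set.indicator_apply, Set.mem_ofPred_eq, Pi.one_apply]
        rw [sum_boole]
        exact_mod_cast card_rankFromTop_le_le (X ω) r
    _ = r * μ Set.univ := lintegral_const _

theorem card_mul_measure_rankFromTop_le_le (hX : Measurable X)
    (hexch : ∀ π : Equiv.Perm ι, μ.map (fun ω => X ω ∘ π) = μ.map X) (j : ι) (r : ℕ) :
    Fintype.card ι * μ {ω | rankFromTop (X ω) j ≤ r} ≤ r * μ Set.univ := by
  calc Fintype.card ι * μ {ω | rankFromTop (X ω) j ≤ r}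
      = ∑ i, μ {ω | rankFromTop (X ω) i ≤ r} := by
        simp [measure_rankFromTop_le_eq hX hexch _ j]
    _ ≤ r * μ Set.univ := sum_measure_rankFromTop_le_le hX r

theorem measure_rankFromTop_le_le [IsProbabilityMeasure μ] (hX : Measurable X)
    (hexch : ∀ π : Equiv.Perm ι, μ.map (fun ω => X ω ∘ π) = μ.map X) (j : ι) {t : ℝ}
    (ht : 0 ≤ t) :
    μ {ω | (rankFromTop (X ω) j : ℝ) ≤ t} ≤ ENNReal.ofReal (t / Fintype.card ι) := by
  have : Nonempty ι := ⟨j⟩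
  have hfloor : {ω | (rankFromTop (X ω) j : ℝ) ≤ t} = {ω | rankFromTop (X ω) j ≤ ⌊t⌋₊} := by
    ext ω
    simp [Nat.le_floor_iff ht]
  have hmul := card_mul_measure_rankFromTop_le_le hX hexch j ⌊t⌋₊
  rw [measure_univ, mul_one, mul_comm, ← ENNReal.le_div_iff_mul_le (by simp) (by simp)] at hmul
  rw [hfloor, ENNReal.ofReal_div_of_pos (by positivity)]
  refine hmul.trans ?_
  rw [ENNReal.ofReal_natCast, ← ENNReal.ofReal_natCast]
  gcongr
  exact Nat.floor_le ht

theorem rankFromTop_snoc_last {m : ℕ} (x : Fin m → ℝ) (s : ℝ) :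
    rankFromTop (Fin.snoc x s : Fin (m + 1) → ℝ) (Fin.last m) = #{i | s ≤ x i} + 1 := by
  simp only [rankFromTop, card_filter, Fin.sum_univ_castSucc, Fin.snoc_castSucc,
    Fin.snoc_last, le_refl, if_true]

theorem rankFromTop_snoc_last_le {m n k : ℕ} (e : Fin m ↪ Fin n) (x : Fin n → ℝ) (s : ℝ)
    {T : Finset (Fin n)} (hT : #T = n - k) :
    rankFromTop (Fin.snoc (fun i => x (e i)) s : Fin (m + 1) → ℝ) (Fin.last m) ≤
      #{j ∈ T | s ≤ x j} + k + 1 := by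
  have hcompl : #Tᶜ ≤ k := by
    rw [card_compl, hT, Fintype.card_fin]
    omega
  have := card_filter_comp_le_card_filter_add_card_compl e T (s ≤ x ·)
  rw [rankFromTop_snoc_last]
  omega

theorem trimmed_threshold_div_le {α : ℝ} {n c k : ℕ} (hα : 0 < α) (hkn : k ≤ n)
    (h : α + k / n + c / n < 1) :
    (α * (1 + ((n - k : ℕ) : ℝ)) + k) / ((n - c : ℕ) + 1 : ℝ) ≤ α + k / n + c / n := by
  rcases Nat.eq_zero_or_pos n with rfl | hn
  · obtain rfl : k = 0 := by omega
    simp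
  have hnR : (0 : ℝ) < n := by exact_mod_cast hn
  have hkc : (k + c : ℝ) < n * (1 - α) := by
    rw [← div_lt_iff₀' hnR, add_div]
    linarith
  have hcn : (c : ℝ) < n := by nlinarith
  rw [Nat.cast_sub hkn, Nat.cast_sub (by exact_mod_cast hcn.le), div_le_iff₀ (by linarith),
    ← sub_nonneg]
  have key : (α + k / n + c / n) * (n - c + 1) - (α * (1 + (n - k)) + k) =
      (α * n * k + k + c + c * (n * (1 - α) - k - c)) / n := by
    field_simp
    ring
  rw [key]
  have : 0 ≤ c * (n * (1 - α) - k - c) := mul_nonneg c.cast_nonneg (by linarith)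
  positivity

end Conformal

open Conformal

theorem trimming_preserves_superuniformity_general
    {Ω : Type*} [MeasurableSpace Ω] (ℙ : Measure Ω) [IsProbabilityMeasure ℙ]
    (n c k : ℕ) (hkn : k ≤ n)
    (S : Fin n → Ω → ℝ) (Stest : Ω → ℝ)
    (hmeas : ∀ j, Measurable (S j)) (hmeasTest : Measurable Stest)
    -- `ι` enumerates the clean (uncontaminated) calibration indices.
    (ι : Fin (n - c) ↪ Fin n)
    -- `Y` lists the clean calibration scores followed by the test score.
    (Y : Fin (n - c + 1) → Ω → ℝ)
    (hY : Y = Fin.snoc (fun i => S (ι i)) Stest)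
    (hexch : ∀ π : Equiv.Perm (Fin (n - c + 1)),
      Measure.map (fun ω i => Y (π i) ω) ℙ = Measure.map (fun ω i => Y i ω) ℙ)
    -- `T ω` is the trimmed calibration set: the `k` removed indices carry the
    -- `k` largest calibration scores.
    (T : Ω → Finset (Fin n))
    (hTcard : ∀ ω, (T ω).card = n - k)
    (ptrim : Ω → ℝ)
    (hp : ∀ ω, ptrim ω =
      (1 + (((T ω).filter (fun j => Stest ω ≤ S j ω)).card : ℝ)) /
        (1 + ((n - k : ℕ) : ℝ)))
    (α : ℝ) (hα : α ∈ Set.Ioo (0 : ℝ) 1) :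
    ℙ {ω | ptrim ω ≤ α} ≤
      ENNReal.ofReal (α + (k : ℝ) / n + (c : ℝ) / n) := by
  rcases le_or_gt 1 (α + (k : ℝ) / n + (c : ℝ) / n) with hbig | hsmall
  · exact prob_le_one.trans (ENNReal.ofReal_one ▸ ENNReal.ofReal_le_ofReal hbig)
  have hYω : ∀ ω, (fun i => Y i ω) = Fin.snoc (fun i => S (ι i) ω) (Stest ω) := fun ω => by
    ext i
    refine Fin.lastCases ?_ (fun i => ?_) i <;> simp [hY]
  have hYmeas : Measurable fun ω i => Y i ω := by
    rw [show (fun ω i => Y i ω) = _ from funext hYω]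
    refine measurable_pi_lambda _ fun i => Fin.lastCases ?_ (fun i => ?_) i
    · simpa using hmeasTest
    · simpa using hmeas (ι i)
  set t := α * (1 + ((n - k : ℕ) : ℝ)) + k
  have hsub : {ω | ptrim ω ≤ α} ⊆
      {ω | (rankFromTop (fun i => Y i ω) (Fin.last (n - c)) : ℝ) ≤ t} := by
    intro ω hω
    rw [Set.mem_ofPred_eq, hp ω, div_le_iff₀ (by positivity)] at hω
    have hrank := rankFromTop_snoc_last_le ι (S · ω) (Stest ω) (hTcard ω)
    rw [Set.mem_ofPred_eq, hYω]
    have : (rankFromTop (Fin.snoc (fun i => S (ι i) ω) (Stest ω)) (Fin.last (n - c)) : ℝ) ≤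
        #{j ∈ T ω | Stest ω ≤ S j ω} + k + 1 := by exact_mod_cast hrank
    linarith
  calc ℙ {ω | ptrim ω ≤ α}
      ≤ ℙ {ω | (rankFromTop (fun i => Y i ω) (Fin.last (n - c)) : ℝ) ≤ t} := measure_mono hsub
    _ ≤ ENNReal.ofReal (t / Fintype.card (Fin (n - c + 1))) :=
        measure_rankFromTop_le_le hYmeas hexch _ (by positivity [hα.1])
    _ ≤ _ := by
        gcongr
        simpa using trimmed_threshold_div_le hα.1 hkn hsmall

/-- Trimming preserves super-uniformity: with at most `c` contaminated
calibration scores, the clean scores (indexed through `ι`) together with the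
null test score `Stest` being exchangeable and a.s. pairwise distinct, and the
trimmed calibration set `T ω` obtained by removing the `k ≥ c` largest
calibration scores, the trimmed conformal p-value
`p_trim = (1 + #{j ∈ T : S_j ≥ S}) / (1 + (n − k))` satisfies
`ℙ(p_trim ≤ α) ≤ α + k/n + c/n` for every `α ∈ (0,1)`. -/
theorem trimming_preserves_superuniformity
    {Ω : Type*} [MeasurableSpace Ω] (ℙ : Measure Ω) [IsProbabilityMeasure ℙ]
    (n c k : ℕ) (hcn : c ≤ n) (hck : c ≤ k) (hkn : k ≤ n)
    (S : Fin n → Ω → ℝ) (Stest : Ω → ℝ)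
    (hmeas : ∀ j, Measurable (S j)) (hmeasTest : Measurable Stest)
    -- `ι` enumerates the clean (uncontaminated) calibration indices.
    (ι : Fin (n - c) ↪ Fin n)
    -- `Y` lists the clean calibration scores followed by the test score.
    (Y : Fin (n - c + 1) → Ω → ℝ)
    (hY : Y = Fin.snoc (fun i => S (ι i)) Stest)
    (hexch : ∀ π : Equiv.Perm (Fin (n - c + 1)),
      Measure.map (fun ω i => Y (π i) ω) ℙ = Measure.map (fun ω i => Y i ω) ℙ)
    (hdist : ∀ᵐ ω ∂ℙ, ∀ i j, i ≠ j → Y i ω ≠ Y j ω)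
    -- `T ω` is the trimmed calibration set: the `k` removed indices carry the
    -- `k` largest calibration scores.
    (T : Ω → Finset (Fin n))
    (hTcard : ∀ ω, (T ω).card = n - k)
    (hTtrim : ∀ ω, ∀ j ∈ T ω, ∀ i ∉ T ω, S j ω ≤ S i ω)
    (ptrim : Ω → ℝ)
    (hp : ∀ ω, ptrim ω =
      (1 + (((T ω).filter (fun j => Stest ω ≤ S j ω)).card : ℝ)) /
        (1 + ((n - k : ℕ) : ℝ)))
    (α : ℝ) (hα : α ∈ Set.Ioo (0 : ℝ) 1) :
    ℙ {ω | ptrim ω ≤ α} ≤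
      ENNReal.ofReal (α + (k : ℝ) / n + (c : ℝ) / n) :=
  trimming_preserves_superuniformity_general ℙ n c k hkn S Stest hmeas hmeasTest ι Y hY hexch T
    hTcard ptrim hp α hα
end
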